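/- arXiv:2007.04046 — 6 statements merged into one kernel-verified Lean document; each statement's English description precedes it below -/
import Mathlib

section
/- In the universal central extension 𝒢̃ of the planar Galilean conformal algebra, the center of 𝒢̃ equals the span of C_1, C_2, C_3. -/
/-- Basis indices for the universal central extension of the planar Galilean
conformal algebra. -/
inductive GtIdx : Type
  | L : ℤ → GtIdx
  | H : ℤ → GtIdx
  | I : ℤ → GtIdx
  | J : ℤ → GtIdx
  | C1 : GtIdx
  | C2 : GtIdx
  | C3 : GtIdx

open GtIdx in
/-- `IsPGCAExt b` says that the Lie algebra `G` together with the basis `b` indexed by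
`GtIdx` realizes the universal central extension of the planar Galilean conformal algebra:
the basis elements satisfy the defining bracket relations (with the central terms involving
`C1, C2, C3`), the elements `C1, C2, C3` are central, and all other brackets among basis
elements vanish. -/
structure IsPGCAExt (G : Type*) [LieRing G] [LieAlgebra ℂ G] (b : Module.Basis GtIdx ℂ G) : Prop where
  lie_LL : ∀ n m : ℤ, ⁅b (L n), b (L m)⁆ = ((m : ℂ) - n) • b (L (m + n))
    + (if m + n = 0 then (n : ℂ) ^ 3 else 0) • b C1
  lie_LH : ∀ n m : ℤ, ⁅b (L n), b (H m)⁆ = (m : ℂ) • b (H (m + n))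
    + (if m + n = 0 then (n : ℂ) ^ 2 else 0) • b C2
  lie_HH : ∀ n m : ℤ, ⁅b (H n), b (H m)⁆ = (if m + n = 0 then (n : ℂ) else 0) • b C3
  lie_LI : ∀ n m : ℤ, ⁅b (L n), b (I m)⁆ = ((m : ℂ) - n) • b (I (m + n))
  lie_LJ : ∀ n m : ℤ, ⁅b (L n), b (J m)⁆ = ((m : ℂ) - n) • b (J (m + n))
  lie_HI : ∀ n m : ℤ, ⁅b (H n), b (I m)⁆ = b (I (m + n))
  lie_HJ : ∀ n m : ℤ, ⁅b (H n), b (J m)⁆ = - b (J (m + n))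
  lie_II : ∀ n m : ℤ, ⁅b (I n), b (I m)⁆ = 0
  lie_IJ : ∀ n m : ℤ, ⁅b (I n), b (J m)⁆ = 0
  lie_JJ : ∀ n m : ℤ, ⁅b (J n), b (J m)⁆ = 0
  lie_C1 : ∀ x : G, ⁅b C1, x⁆ = 0
  lie_C2 : ∀ x : G, ⁅b C2, x⁆ = 0
  lie_C3 : ∀ x : G, ⁅b C3, x⁆ = 0

/-!
`ad L₀` and `ad H₀` act diagonally on the basis, with eigenvalues the mode number and the
charge (`1` on `I`, `-1` on `J`, `0` otherwise). A central element is killed by both, so only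
its `L₀`, `H₀`, `C₁`, `C₂`, `C₃` coordinates survive; bracketing with `L₁` and `I₁` then
removes the `L₀` and `H₀` components.
-/

namespace Module.Basis

variable {ι R M : Type*} [CommSemiring R] [AddCommMonoid M] [Module R M]
  (b : Basis ι R M) {f : M →ₗ[R] M} {μ : ι → R}

theorem repr_apply_of_diagonal (hf : ∀ i, f (b i) = μ i • b i) (x : M) (i : ι) :
    b.repr (f x) i = μ i * b.repr x i := by
  have : (Finsupp.lapply i ∘ₗ b.repr.toLinearMap) ∘ₗ f
      = LinearMap.mulLeft R (μ i) ∘ₗ Finsupp.lapply i ∘ₗ b.repr.toLinearMap := by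
    refine b.ext fun k => ?_
    rcases eq_or_ne k i with rfl | hki
    · simp [hf]
    · simp [hf, Finsupp.single_eq_of_ne hki.symm]
  exact LinearMap.congr_fun this x

theorem repr_eq_zero_of_diagonal [NoZeroDivisors R] (hf : ∀ i, f (b i) = μ i • b i)
    {z : M} (hz : f z = 0) {i : ι} (hi : μ i ≠ 0) : b.repr z i = 0 := by
  have h := b.repr_apply_of_diagonal hf z i
  rw [hz, map_zero, Finsupp.zero_apply, eq_comm, mul_eq_zero] at h
  exact h.resolve_left hi

end Module.Basis

namespace GtIdx

def degree : GtIdx → ℤ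
  | L m | H m | I m | J m => m
  | _ => 0

def charge : GtIdx → ℂ
  | I _ => 1
  | J _ => -1
  | _ => 0

theorem degree_eq_zero_and_charge_eq_zero_iff (k : GtIdx) :
    degree k = 0 ∧ charge k = 0 ↔ k ∈ ({L 0, H 0, C1, C2, C3} : Set GtIdx) := by
  cases k <;> simp [degree, charge, eq_comm]

end GtIdx

namespace IsPGCAExt

open GtIdx

variable {G : Type*} [LieRing G] [LieAlgebra ℂ G] {b : Module.Basis GtIdx ℂ G}

theorem lie_C1_right (hb : IsPGCAExt G b) (x : G) : ⁅x, b C1⁆ = 0 := by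
  rw [← lie_skew, hb.lie_C1, neg_zero]

theorem lie_C2_right (hb : IsPGCAExt G b) (x : G) : ⁅x, b C2⁆ = 0 := by
  rw [← lie_skew, hb.lie_C2, neg_zero]

theorem lie_C3_right (hb : IsPGCAExt G b) (x : G) : ⁅x, b C3⁆ = 0 := by
  rw [← lie_skew, hb.lie_C3, neg_zero]

theorem span_central_le_center (hb : IsPGCAExt G b) :
    Submodule.span ℂ {b C1, b C2, b C3} ≤ (LieAlgebra.center ℂ G : Submodule ℂ G) := by
  rw [Submodule.span_le]
  rintro x (rfl | rfl | rfl) <;> refine (LieModule.mem_maxTrivSubmodule ℂ G G _).mpr fun y => ?_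
  exacts [hb.lie_C1_right y, hb.lie_C2_right y, hb.lie_C3_right y]

theorem lie_L_zero (hb : IsPGCAExt G b) (k : GtIdx) :
    ⁅b (L 0), b k⁆ = (degree k : ℂ) • b k := by
  cases k <;> simp [degree, hb.lie_LL, hb.lie_LH, hb.lie_LI, hb.lie_LJ, hb.lie_C1_right,
    hb.lie_C2_right, hb.lie_C3_right]

theorem lie_H_zero (hb : IsPGCAExt G b) (k : GtIdx) :
    ⁅b (H 0), b k⁆ = charge k • b k := by
  cases k with
  | L p =>
    rw [← lie_skew, hb.lie_LH]
    rcases eq_or_ne p 0 with rfl | hp <;> simp [charge, *]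
  | _ => simp [charge, hb.lie_HH, hb.lie_HI, hb.lie_HJ, hb.lie_C1_right, hb.lie_C2_right,
      hb.lie_C3_right]

theorem mem_span_of_mem_center (hb : IsPGCAExt G b) {z : G}
    (hz : z ∈ LieAlgebra.center ℂ G) :
    z ∈ Submodule.span ℂ {b (L 0), b (H 0), b C1, b C2, b C3} := by
  have hz : ∀ x, ⁅x, z⁆ = 0 := (LieModule.mem_maxTrivSubmodule ℂ G G z).mp hz
  have hdegree : ∀ k, degree k ≠ 0 → b.repr z k = 0 := fun k hk =>
    b.repr_eq_zero_of_diagonal (f := LieAlgebra.ad ℂ G (b (L 0))) hb.lie_L_zero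
      (hz _) (by exact_mod_cast hk)
  have hcharge : ∀ k, charge k ≠ 0 → b.repr z k = 0 := fun k hk =>
    b.repr_eq_zero_of_diagonal (f := LieAlgebra.ad ℂ G (b (H 0))) hb.lie_H_zero (hz _) hk
  have hsupport : ↑(b.repr z).support ⊆ ({L 0, H 0, C1, C2, C3} : Set GtIdx) := by
    intro k hk
    rw [Finset.mem_coe, Finsupp.mem_support_iff] at hk
    exact (degree_eq_zero_and_charge_eq_zero_iff k).mp
      ⟨not_not.mp (mt (hdegree k) hk), not_not.mp (mt (hcharge k) hk)⟩
  simpa [Set.image_insert_eq] using b.mem_span_image.mpr hsupport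

theorem center_le_span_central (hb : IsPGCAExt G b) :
    (LieAlgebra.center ℂ G : Submodule ℂ G) ≤ Submodule.span ℂ {b C1, b C2, b C3} := by
  intro z hz
  obtain ⟨α, y, hy, rfl⟩ := Submodule.mem_span_insert.mp (hb.mem_span_of_mem_center hz)
  obtain ⟨β, w, hw, rfl⟩ := Submodule.mem_span_insert.mp hy
  have hz : ∀ x, ⁅x, α • b (L 0) + (β • b (H 0) + w)⁆ = 0 :=
    (LieModule.mem_maxTrivSubmodule ℂ G G _).mp hz
  have hw_central : ∀ x, ⁅x, w⁆ = 0 :=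
    (LieModule.mem_maxTrivSubmodule ℂ G G w).mp (hb.span_central_le_center hw)
  have hα : α = 0 := by
    have h := hz (b (L 1))
    simp only [lie_add, lie_smul, hw_central, hb.lie_LL, hb.lie_LH] at h
    simpa [b.ne_zero] using h
  have hβ : β = 0 := by
    have h := hz (b (I 1))
    simp only [hα, zero_smul, zero_add, lie_add, lie_smul, hw_central,
      ← lie_skew (b (I 1)) (b (H 0)), hb.lie_HI] at h
    simpa [b.ne_zero] using h
  simpa [hα, hβ] using hw

end IsPGCAExt

/-- The center of the universal central extension `𝒢̃` of the planar Galilean conformal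
algebra equals the span of `C1, C2, C3`. -/
theorem pgcaExt_center {G : Type*} [LieRing G] [LieAlgebra ℂ G]
    (b : Module.Basis GtIdx ℂ G) (hb : IsPGCAExt G b) :
    (LieAlgebra.center ℂ G : Submodule ℂ G)
      = Submodule.span ℂ {b GtIdx.C1, b GtIdx.C2, b GtIdx.C3} :=
  le_antisymm hb.center_le_span_central hb.span_central_le_center
end

section
/- The positive part 𝒢⁺ of the planar Galilean conformal algebra, spanned by {L_m, H_m, I_m, J_m : m ≥ 1}, is a Lie subalgebra of 𝒢, and as a Lie algebra it is generated by the five elements L_1, L_2, H_1, I_1, J_1. -/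
/-- Basis indices for the planar Galilean conformal algebra. -/
inductive GIdx : Type
  | L : ℤ → GIdx
  | H : ℤ → GIdx
  | I : ℤ → GIdx
  | J : ℤ → GIdx

open GIdx in
/-- `IsPGCA b` says that the Lie algebra `G` together with the basis `b` indexed by
`GIdx` realizes the planar Galilean conformal algebra: the basis elements satisfy the
defining bracket relations, and all other brackets among basis elements vanish. -/
structure IsPGCA (G : Type*) [LieRing G] [LieAlgebra ℂ G] (b : Module.Basis GIdx ℂ G) : Prop where
  lie_LL : ∀ n m : ℤ, ⁅b (L n), b (L m)⁆ = ((m : ℂ) - n) • b (L (m + n))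
  lie_LH : ∀ n m : ℤ, ⁅b (L n), b (H m)⁆ = (m : ℂ) • b (H (m + n))
  lie_LI : ∀ n m : ℤ, ⁅b (L n), b (I m)⁆ = ((m : ℂ) - n) • b (I (m + n))
  lie_LJ : ∀ n m : ℤ, ⁅b (L n), b (J m)⁆ = ((m : ℂ) - n) • b (J (m + n))
  lie_HI : ∀ n m : ℤ, ⁅b (H n), b (I m)⁆ = b (I (m + n))
  lie_HJ : ∀ n m : ℤ, ⁅b (H n), b (J m)⁆ = - b (J (m + n))
  lie_HH : ∀ n m : ℤ, ⁅b (H n), b (H m)⁆ = 0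
  lie_II : ∀ n m : ℤ, ⁅b (I n), b (I m)⁆ = 0
  lie_IJ : ∀ n m : ℤ, ⁅b (I n), b (J m)⁆ = 0
  lie_JJ : ∀ n m : ℤ, ⁅b (J n), b (J m)⁆ = 0

/-- The set of positive-index basis vectors of the planar Galilean conformal algebra,
spanning the positive part `𝒢⁺`. -/
def pgcaPosSet {G : Type*} [LieRing G] [LieAlgebra ℂ G] (b : Module.Basis GIdx ℂ G) : Set G :=
  {x : G | ∃ m : ℤ, 1 ≤ m ∧
    (x = b (GIdx.L m) ∨ x = b (GIdx.H m) ∨ x = b (GIdx.I m) ∨ x = b (GIdx.J m))}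

/-! Brackets of basis vectors add indices, so the span of the positive basis vectors is closed
under the bracket. For generation, `ad L₁` sends `L_k ↦ (k - 1) L_{k+1}` and `H_k ↦ k H_{k+1}`,
while `ad H₁` sends `I_k ↦ I_{k+1}` and `J_k ↦ -J_{k+1}`; for `k ≥ 1` the only vanishing
coefficient is at `L₁` (since `⁅L₁, L₁⁆ = 0`), which is why `L₂` must be a generator. Induction
on the index from the generators then reaches every positive basis vector. -/

open GIdx

namespace LieSubalgebra

variable {R L : Type*} [CommRing R] [LieRing L] [LieAlgebra R L]

theorem coe_lieSpan_eq_span_of_forall_lie_mem_span {s : Set L}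
    (hs : ∀ x ∈ s, ∀ y ∈ s, ⁅x, y⁆ ∈ Submodule.span R s) :
    (lieSpan R L s : Submodule R L) = Submodule.span R s := by
  refine le_antisymm ?_ submodule_span_le_lieSpan
  suffices hlie : ∀ {x y}, x ∈ Submodule.span R s → y ∈ Submodule.span R s →
      ⁅x, y⁆ ∈ Submodule.span R s by
    change _ ≤ ({ Submodule.span R s with lie_mem' := hlie } : LieSubalgebra R L)
    exact lieSpan_le.mpr Submodule.subset_span
  intro x y hx hy
  have hmem := Submodule.apply_mem_map₂ (LieModule.toEnd R L L : L →ₗ[R] Module.End R L) hx hy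
  rw [Submodule.map₂_span_span] at hmem
  refine Submodule.span_le.mpr ?_ hmem
  rintro _ ⟨u, hu, v, hv, rfl⟩
  exact hs u hu v hv

theorem apply_mem_of_succ_eq_smul_lie (K : LieSubalgebra R L) {a : L} (ha : a ∈ K) {f : ℤ → L}
    {m₀ : ℤ} (h₀ : f m₀ ∈ K) (hstep : ∀ k, m₀ ≤ k → ∃ c : R, f (k + 1) = c • ⁅a, f k⁆)
    {m : ℤ} (hm : m₀ ≤ m) : f m ∈ K := by
  induction m, hm using Int.leInduction with
  | base => exact h₀
  | succ k hk ih =>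
    obtain ⟨c, hc⟩ := hstep k hk
    rw [hc]
    exact K.smul_mem c (K.lie_mem ha ih)

end LieSubalgebra

section PositivePart

variable {G : Type*} [LieRing G] [LieAlgebra ℂ G] {b : Module.Basis GIdx ℂ G}

theorem basis_L_mem_span_pgcaPosSet {m : ℤ} (hm : 1 ≤ m) :
    b (L m) ∈ Submodule.span ℂ (pgcaPosSet b) :=
  Submodule.subset_span ⟨m, hm, Or.inl rfl⟩

theorem basis_H_mem_span_pgcaPosSet {m : ℤ} (hm : 1 ≤ m) :
    b (H m) ∈ Submodule.span ℂ (pgcaPosSet b) :=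
  Submodule.subset_span ⟨m, hm, Or.inr (Or.inl rfl)⟩

theorem basis_I_mem_span_pgcaPosSet {m : ℤ} (hm : 1 ≤ m) :
    b (I m) ∈ Submodule.span ℂ (pgcaPosSet b) :=
  Submodule.subset_span ⟨m, hm, Or.inr (Or.inr (Or.inl rfl))⟩

theorem basis_J_mem_span_pgcaPosSet {m : ℤ} (hm : 1 ≤ m) :
    b (J m) ∈ Submodule.span ℂ (pgcaPosSet b) :=
  Submodule.subset_span ⟨m, hm, Or.inr (Or.inr (Or.inr rfl))⟩

namespace IsPGCA

theorem lie_mem_span_pgcaPosSet (hb : IsPGCA G b) :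
    ∀ x ∈ pgcaPosSet b, ∀ y ∈ pgcaPosSet b, ⁅x, y⁆ ∈ Submodule.span ℂ (pgcaPosSet b) := by
  rintro x ⟨m, hm, hx⟩ y ⟨n, hn, hy⟩
  have hnm : 1 ≤ n + m := by omega
  have hmn : 1 ≤ m + n := by omega
  rcases hx with rfl | rfl | rfl | rfl <;> rcases hy with rfl | rfl | rfl | rfl
  · rw [hb.lie_LL]; exact Submodule.smul_mem _ _ (basis_L_mem_span_pgcaPosSet hnm)
  · rw [hb.lie_LH]; exact Submodule.smul_mem _ _ (basis_H_mem_span_pgcaPosSet hnm)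
  · rw [hb.lie_LI]; exact Submodule.smul_mem _ _ (basis_I_mem_span_pgcaPosSet hnm)
  · rw [hb.lie_LJ]; exact Submodule.smul_mem _ _ (basis_J_mem_span_pgcaPosSet hnm)
  · rw [← lie_skew, hb.lie_LH]
    exact neg_mem (Submodule.smul_mem _ _ (basis_H_mem_span_pgcaPosSet hmn))
  · rw [hb.lie_HH]; exact zero_mem _
  · rw [hb.lie_HI]; exact basis_I_mem_span_pgcaPosSet hnm
  · rw [hb.lie_HJ]; exact neg_mem (basis_J_mem_span_pgcaPosSet hnm)
  · rw [← lie_skew, hb.lie_LI]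
    exact neg_mem (Submodule.smul_mem _ _ (basis_I_mem_span_pgcaPosSet hmn))
  · rw [← lie_skew, hb.lie_HI]; exact neg_mem (basis_I_mem_span_pgcaPosSet hmn)
  · rw [hb.lie_II]; exact zero_mem _
  · rw [hb.lie_IJ]; exact zero_mem _
  · rw [← lie_skew, hb.lie_LJ]
    exact neg_mem (Submodule.smul_mem _ _ (basis_J_mem_span_pgcaPosSet hmn))
  · rw [← lie_skew, hb.lie_HJ, neg_neg]; exact basis_J_mem_span_pgcaPosSet hmn
  · rw [← lie_skew, hb.lie_IJ, neg_zero]; exact zero_mem _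
  · rw [hb.lie_JJ]; exact zero_mem _

theorem coe_lieSpan_pgcaPosSet (hb : IsPGCA G b) :
    (LieSubalgebra.lieSpan ℂ G (pgcaPosSet b) : Submodule ℂ G) =
      Submodule.span ℂ (pgcaPosSet b) :=
  LieSubalgebra.coe_lieSpan_eq_span_of_forall_lie_mem_span hb.lie_mem_span_pgcaPosSet

theorem basis_L_succ (hb : IsPGCA G b) {k : ℤ} (hk : k ≠ 1) :
    b (L (k + 1)) = ((k : ℂ) - 1)⁻¹ • ⁅b (L 1), b (L k)⁆ := by
  have hk' : (k : ℂ) - 1 ≠ 0 := sub_ne_zero.mpr (by exact_mod_cast hk)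
  rw [hb.lie_LL, smul_smul, Int.cast_one, inv_mul_cancel₀ hk', one_smul]

theorem basis_H_succ (hb : IsPGCA G b) {k : ℤ} (hk : k ≠ 0) :
    b (H (k + 1)) = (k : ℂ)⁻¹ • ⁅b (L 1), b (H k)⁆ := by
  rw [hb.lie_LH, smul_smul, inv_mul_cancel₀ (by exact_mod_cast hk), one_smul]

theorem basis_I_succ (hb : IsPGCA G b) (k : ℤ) : b (I (k + 1)) = ⁅b (H 1), b (I k)⁆ :=
  (hb.lie_HI 1 k).symm

theorem basis_J_succ (hb : IsPGCA G b) (k : ℤ) : b (J (k + 1)) = (-1 : ℂ) • ⁅b (H 1), b (J k)⁆ := by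
  rw [hb.lie_HJ, neg_one_smul, neg_neg]

theorem pgcaPosSet_subset (hb : IsPGCA G b) {K : LieSubalgebra ℂ G} (hL₁ : b (L 1) ∈ K) (hL₂ : b (L 2) ∈ K)
    (hH₁ : b (H 1) ∈ K) (hI₁ : b (I 1) ∈ K) (hJ₁ : b (J 1) ∈ K) : pgcaPosSet b ⊆ K := by
  rintro _ ⟨m, hm, rfl | rfl | rfl | rfl⟩
  · obtain rfl | hm₂ := eq_or_lt_of_le hm
    · exact hL₁
    · exact K.apply_mem_of_succ_eq_smul_lie hL₁ (f := fun k ↦ b (L k)) hL₂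
        (fun k hk ↦ ⟨_, hb.basis_L_succ (by omega)⟩) (show 2 ≤ m by omega)
  · exact K.apply_mem_of_succ_eq_smul_lie hL₁ (f := fun k ↦ b (H k)) hH₁
      (fun k hk ↦ ⟨_, hb.basis_H_succ (by omega)⟩) hm
  · exact K.apply_mem_of_succ_eq_smul_lie hH₁ (f := fun k ↦ b (I k)) hI₁
      (fun k _ ↦ ⟨1, (hb.basis_I_succ k).trans (one_smul _ _).symm⟩) hm
  · exact K.apply_mem_of_succ_eq_smul_lie hH₁ (f := fun k ↦ b (J k)) hJ₁
      (fun k _ ↦ ⟨_, hb.basis_J_succ k⟩) hm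

end IsPGCA

end PositivePart

/-- The positive part `𝒢⁺ = span{L_m, H_m, I_m, J_m : m ≥ 1}` is a Lie subalgebra of the
planar Galilean conformal algebra `𝒢`, and as a Lie algebra it is generated by the five
elements `L_1, L_2, H_1, I_1, J_1`. -/
theorem pgca_positive_part {G : Type*} [LieRing G] [LieAlgebra ℂ G]
    (b : Module.Basis GIdx ℂ G) (hb : IsPGCA G b) :
    (∀ x ∈ Submodule.span ℂ (pgcaPosSet b), ∀ y ∈ Submodule.span ℂ (pgcaPosSet b),
      ⁅x, y⁆ ∈ Submodule.span ℂ (pgcaPosSet b)) ∧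
    ((LieSubalgebra.lieSpan ℂ G
        {b (GIdx.L 1), b (GIdx.L 2), b (GIdx.H 1), b (GIdx.I 1), b (GIdx.J 1)} : Set G)
      = ↑(Submodule.span ℂ (pgcaPosSet b))) := by
  rw [← hb.coe_lieSpan_pgcaPosSet]
  refine ⟨fun x hx y hy ↦ LieSubalgebra.lie_mem _ hx hy, ?_⟩
  apply le_antisymm
  · apply LieSubalgebra.lieSpan_mono
    rintro _ (rfl | rfl | rfl | rfl | rfl)
    exacts [⟨1, le_rfl, by simp⟩, ⟨2, by norm_num, by simp⟩, ⟨1, le_rfl, by simp⟩,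
      ⟨1, le_rfl, by simp⟩, ⟨1, le_rfl, by simp⟩]
  · apply LieSubalgebra.lieSpan_le.mpr
    apply hb.pgcaPosSet_subset <;> exact LieSubalgebra.subset_lieSpan (by simp)
end

section
/- In the universal enveloping algebra U(𝒢̃) of the universal central extension of the planar Galilean conformal algebra, for any k ∈ ℤ≥0 and a ∈ ℕ, the following identity holds: [I_{k+1}, L_{-k}^a] = Σ_{s=1}^{a} C(a,s) · (∏_{t=0}^{s-1} (tk - 2k - 1)) · L_{-k}^{a-s} I_{1+k-sk}, where C(a,s) is the binomial coefficient and the bracket is the commutator in U(𝒢̃). -/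
/-!
Right multiplication by `x` splits as `mulLeft x + δ` with `δ z = ⁅z, x⁆`, and the two summands
commute, so the binomial theorem expands `y * x ^ a` as `∑ C(a, s) x ^ (a - s) δ ^ s y`.
For `x = L_{-k}` in `U(𝒢̃)`, `δ` sends `I_{1+k-sk}` to `(sk - 2k - 1) I_{1+k-(s+1)k}`, so
`δ ^ s I_{k+1} = ∏_{t<s} (tk - 2k - 1) I_{1+k-sk}`.
-/

open Finset LinearMap

section PowerCommutator

variable {R A : Type*} [CommRing R] [Ring A] [Algebra R A]

theorem mul_pow_eq_sum_choose (x y : A) (n : ℕ) :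
    y * x ^ n = ∑ s ∈ range (n + 1),
      n.choose s • (x ^ (n - s) * ((mulRight R x - mulLeft R x) ^ s) y) := by
  set δ := mulRight R x - mulLeft R x
  have hcomm : Commute δ (mulLeft R x) :=
    (commute_mulLeft_right x x).symm.sub_left (Commute.refl _)
  have hsplit : mulRight R x = δ + mulLeft R x := (sub_add_cancel _ _).symm
  have := congrArg (· y) (hcomm.add_pow n)
  simp only [← hsplit, pow_mulRight, mulRight_apply] at this
  rw [this, LinearMap.sum_apply]
  refine sum_congr rfl fun s _ => ?_
  rw [(hcomm.pow_pow s (n - s)).eq, pow_mulLeft, Module.End.mul_apply, Module.End.mul_apply,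
    Module.End.natCast_apply, mulLeft_apply, map_nsmul, mul_smul_comm]

variable (x : A) (f : ℕ → A) (d : ℕ → R)

theorem pow_mulRight_sub_mulLeft_apply_eq_prod_smul (hf : ∀ s, ⁅f s, x⁆ = d s • f (s + 1))
    (s : ℕ) : ((mulRight R x - mulLeft R x) ^ s) (f 0) = (∏ t ∈ range s, d t) • f s := by
  induction s with
  | zero => simp
  | succ s ih =>
    rw [pow_succ', Module.End.mul_apply, ih, map_smul, LinearMap.sub_apply, mulRight_apply,
      mulLeft_apply, ← Ring.lie_def, hf, smul_smul, prod_range_succ, mul_comm]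

theorem lie_pow_eq_sum_choose_prod_smul (hf : ∀ s, ⁅f s, x⁆ = d s • f (s + 1)) (n : ℕ) :
    ⁅f 0, x ^ n⁆ = ∑ s ∈ Icc 1 n,
      ((n.choose s : R) * ∏ t ∈ range s, d t) • (x ^ (n - s) * f s) := by
  rw [Ring.lie_def, mul_pow_eq_sum_choose (R := R), sum_range_succ', ← Ico_add_one_right_eq_Icc,
    sum_Ico_eq_sum_range]
  simp only [pow_mulRight_sub_mulLeft_apply_eq_prod_smul x f d hf, Nat.choose_zero_right,
    Nat.sub_zero, prod_range_zero, one_smul, add_sub_cancel_right, Nat.add_sub_cancel]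
  refine sum_congr rfl fun s _ => ?_
  rw [add_comm 1 s, mul_smul_comm, ← Nat.cast_smul_eq_nsmul R, smul_smul]

end PowerCommutator

open UniversalEnvelopingAlgebra in
theorem IsPGCAExt.ι_lie_I_L {G : Type*} [LieRing G] [LieAlgebra ℂ G]
    {b : Module.Basis GtIdx ℂ G} (hb : IsPGCAExt G b) (m n : ℤ) :
    ⁅ι ℂ (b (GtIdx.I m)), ι ℂ (b (GtIdx.L n))⁆ = ((n : ℂ) - m) • ι ℂ (b (GtIdx.I (m + n))) := by
  let _ := LieRing.ofAssociativeRing (A := UniversalEnvelopingAlgebra ℂ G)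
  rw [← LieHom.map_lie, ← lie_skew, hb.lie_LI, map_neg, map_smul, ← neg_smul, neg_sub]

open UniversalEnvelopingAlgebra in
theorem uea_comm_I_Lpow_general {G : Type*} [LieRing G] [LieAlgebra ℂ G]
    (b : Module.Basis GtIdx ℂ G) (hb : IsPGCAExt G b) (k : ℕ) (a : ℕ) :
    ⁅ι ℂ (b (GtIdx.I ((k : ℤ) + 1))),
        (ι ℂ (b (GtIdx.L (-(k : ℤ)))) : UniversalEnvelopingAlgebra ℂ G) ^ a⁆
      = ∑ s ∈ Finset.Icc 1 a,
          ((a.choose s : ℂ) * ∏ t ∈ Finset.range s, ((t : ℂ) * k - 2 * k - 1)) •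
            ((ι ℂ (b (GtIdx.L (-(k : ℤ)))) : UniversalEnvelopingAlgebra ℂ G) ^ (a - s)
              * ι ℂ (b (GtIdx.I (1 + (k : ℤ) - (s : ℤ) * k)))) := by
  set I : ℕ → UniversalEnvelopingAlgebra ℂ G := fun s => ι ℂ (b (GtIdx.I (1 + k - s * k)))
  have hI : ∀ s, ⁅I s, ι ℂ (b (GtIdx.L (-k)))⁆ = ((s : ℂ) * k - 2 * k - 1) • I (s + 1) := by
    intro s
    have hidx : 1 + (k : ℤ) - s * k + -k = 1 + k - ((s + 1 : ℕ) : ℤ) * k := by push_cast; ring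
    rw [hb.ι_lie_I_L, hidx]
    congr 1
    push_cast
    ring
  have hI0 : I 0 = ι ℂ (b (GtIdx.I (k + 1))) := by simp [I, add_comm]
  rw [← hI0]
  exact lie_pow_eq_sum_choose_prod_smul _ I _ hI a

open UniversalEnvelopingAlgebra in
/-- In `U(𝒢̃)`: `[I_{k+1}, L_{-k}^a] = Σ_{s=1}^a C(a,s) (∏_{t=0}^{s-1}(tk-2k-1))
L_{-k}^{a-s} I_{1+k-sk}`. -/
theorem uea_comm_I_Lpow {G : Type*} [LieRing G] [LieAlgebra ℂ G]
    (b : Module.Basis GtIdx ℂ G) (hb : IsPGCAExt G b) (k : ℕ) (a : ℕ) (ha : 1 ≤ a) :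
    ⁅ι ℂ (b (GtIdx.I ((k : ℤ) + 1))),
        (ι ℂ (b (GtIdx.L (-(k : ℤ)))) : UniversalEnvelopingAlgebra ℂ G) ^ a⁆
      = ∑ s ∈ Finset.Icc 1 a,
          ((a.choose s : ℂ) * ∏ t ∈ Finset.range s, ((t : ℂ) * k - 2 * k - 1)) •
            ((ι ℂ (b (GtIdx.L (-(k : ℤ)))) : UniversalEnvelopingAlgebra ℂ G) ^ (a - s)
              * ι ℂ (b (GtIdx.I (1 + (k : ℤ) - (s : ℤ) * k)))) :=
  uea_comm_I_Lpow_general b hb k a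
end

section
/- Let φ : 𝒢⁺ → ℂ be a Lie algebra homomorphism, V a Whittaker 𝒢-module of type φ with cyclic Whittaker vector w_φ, and define the modified 'star' action of 𝒢⁺ on V by x ⋆ v = x·v − φ(x)v. Then for every n ≥ 1 and E_n ∈ {L_n, H_n, I_n, J_n}, the operator v ↦ E_n ⋆ v acts locally nilpotently on V, i.e., for each v ∈ V there exists p ∈ ℕ with E_n ⋆ (E_n ⋆ (⋯ ⋆ v)) = 0 after p applications. -/
attribute [local instance 100] LieRing.ofAssociativeRing

section GradedWhittaker

variable {R G V : Type*} [CommRing R] [LieRing G] [LieAlgebra R G]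
  [AddCommGroup V] [LieRingModule G V]

-- `w` has weight `1` and a factor of degree `-m` adds `m + 1`, so that filtration level `0`
-- is `⊥` and the star action of a positive-degree element lowers the level by one.
inductive IsNegMonomial (g : ℤ → Submodule R G) (w : V) : V → ℕ → Prop
  | base : IsNegMonomial g w w 1
  | lie {m : ℕ} {x : G} {v : V} {d : ℕ} (hx : x ∈ g (-m)) (hv : IsNegMonomial g w v d) :
      IsNegMonomial g w ⁅x, v⁆ (d + m + 1)

variable {g : ℤ → Submodule R G} {w : V}

lemma IsNegMonomial.one_le {v : V} {d : ℕ} (hv : IsNegMonomial g w v d) : 1 ≤ d := by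
  cases hv <;> omega

variable [Module R V]

variable (g w) in
def whittakerFiltration (d : ℕ) : Submodule R V :=
  Submodule.span R {v | ∃ d' ≤ d, IsNegMonomial g w v d'}

lemma whittakerFiltration_mono : Monotone (whittakerFiltration g w) :=
  fun _ _ h => Submodule.span_mono fun _ ⟨d', hd', hv⟩ => ⟨d', hd'.trans h, hv⟩

lemma IsNegMonomial.mem_whittakerFiltration {v : V} {d : ℕ} (hv : IsNegMonomial g w v d) :
    v ∈ whittakerFiltration g w d :=
  Submodule.subset_span ⟨d, le_rfl, hv⟩

lemma whittakerFiltration_zero : whittakerFiltration g w 0 = ⊥ := by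
  rw [whittakerFiltration, Submodule.span_eq_bot]
  rintro v ⟨d, hd, hv⟩
  exact absurd hv.one_le (by omega)

variable [LieModule R G V]

lemma lie_mem_whittakerFiltration {m : ℕ} {x : G} (hx : x ∈ g (-m)) {d : ℕ} {v : V}
    (hv : v ∈ whittakerFiltration g w d) : ⁅x, v⁆ ∈ whittakerFiltration g w (d + m + 1) := by
  suffices whittakerFiltration g w d ≤
      (whittakerFiltration g w (d + m + 1)).comap (LieModule.toEnd R G V x) from this hv
  refine Submodule.span_le.mpr fun u ⟨d', hd', hu⟩ => ?_
  exact whittakerFiltration_mono (by omega) (hu.lie hx).mem_whittakerFiltration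

variable (V) in
def whittakerStar (χ : G → R) (x : G) : Module.End R V :=
  LieModule.toEnd R G V x - χ x • LinearMap.id

@[simp]
lemma whittakerStar_apply (χ : G → R) (x : G) (v : V) :
    whittakerStar V χ x v = ⁅x, v⁆ - χ x • v := rfl

lemma whittakerStar_lie (χ : G → R) (y x : G) (v : V) :
    whittakerStar V χ y ⁅x, v⁆ = ⁅x, whittakerStar V χ y v⁆ + ⁅⁅y, x⁆, v⁆ := by
  rw [whittakerStar_apply, whittakerStar_apply, leibniz_lie, lie_sub, lie_smul]
  abel

lemma lie_eq_whittakerStar_add (χ : G → R) (x : G) (v : V) :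
    ⁅x, v⁆ = whittakerStar V χ x v + χ x • v := by
  rw [whittakerStar_apply, sub_add_cancel]

variable {χ : G → R}

lemma IsNegMonomial.whittakerStar_mem
    (hg : ∀ p q x y, x ∈ g p → y ∈ g q → ⁅x, y⁆ ∈ g (p + q))
    (hwhit : ∀ p, 1 ≤ p → ∀ x ∈ g p, ⁅x, w⁆ = χ x • w)
    {v : V} {d : ℕ} (hv : IsNegMonomial g w v d) :
    ∀ p, 1 ≤ p → ∀ y ∈ g p, whittakerStar V χ y v ∈ whittakerFiltration g w (d - 1) := by
  induction hv with
  | base =>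
    intro p hp y hy
    rw [whittakerStar_apply, hwhit p hp y hy, sub_self]
    exact zero_mem _
  | @lie m x v d hx hv ih =>
    intro p hp y hy
    have hd := hv.one_le
    rw [whittakerStar_lie]
    refine add_mem ?_ ?_
    · exact whittakerFiltration_mono (by omega) (lie_mem_whittakerFiltration hx (ih p hp y hy))
    have hyx : ⁅y, x⁆ ∈ g (p - m) := hg _ _ _ _ hy hx
    rcases le_or_gt 1 (p - m) with hpos | hneg
    · rw [lie_eq_whittakerStar_add χ]
      refine add_mem ?_ (Submodule.smul_mem _ _ ?_)
      · exact whittakerFiltration_mono (by omega) (ih _ hpos _ hyx)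
      · exact whittakerFiltration_mono (by omega) hv.mem_whittakerFiltration
    · have hk : p - m = -((m - p).toNat : ℕ) := by omega
      rw [hk] at hyx
      exact whittakerFiltration_mono (by omega) (hv.lie hyx).mem_whittakerFiltration

lemma whittakerStar_mem_whittakerFiltration
    (hg : ∀ p q x y, x ∈ g p → y ∈ g q → ⁅x, y⁆ ∈ g (p + q))
    (hwhit : ∀ p, 1 ≤ p → ∀ x ∈ g p, ⁅x, w⁆ = χ x • w)
    {p : ℤ} (hp : 1 ≤ p) {y : G} (hy : y ∈ g p)
    {d : ℕ} {v : V} (hv : v ∈ whittakerFiltration g w (d + 1)) :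
    whittakerStar V χ y v ∈ whittakerFiltration g w d := by
  suffices whittakerFiltration g w (d + 1) ≤
      (whittakerFiltration g w d).comap (whittakerStar V χ y) from this hv
  refine Submodule.span_le.mpr fun u ⟨d', hd', hu⟩ => ?_
  exact whittakerFiltration_mono (by omega) (hu.whittakerStar_mem hg hwhit p hp y hy)

lemma iterate_whittakerStar_eq_zero
    (hg : ∀ p q x y, x ∈ g p → y ∈ g q → ⁅x, y⁆ ∈ g (p + q))
    (hwhit : ∀ p, 1 ≤ p → ∀ x ∈ g p, ⁅x, w⁆ = χ x • w)
    {p : ℤ} (hp : 1 ≤ p) {y : G} (hy : y ∈ g p)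
    {d : ℕ} {v : V} (hv : v ∈ whittakerFiltration g w d) :
    (whittakerStar V χ y)^[d] v = 0 := by
  induction d generalizing v with
  | zero => simpa [whittakerFiltration_zero] using hv
  | succ d ih =>
    rw [Function.iterate_succ_apply]
    exact ih (whittakerStar_mem_whittakerFiltration hg hwhit hp hy hv)

lemma lie_mem_iSup_whittakerFiltration_of_mem
    (hg : ∀ p q x y, x ∈ g p → y ∈ g q → ⁅x, y⁆ ∈ g (p + q))
    (hwhit : ∀ p, 1 ≤ p → ∀ x ∈ g p, ⁅x, w⁆ = χ x • w)
    {q : ℤ} {x : G} (hx : x ∈ g q) {d : ℕ} {v : V}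
    (hv : v ∈ whittakerFiltration g w d) : ⁅x, v⁆ ∈ ⨆ d, whittakerFiltration g w d := by
  rcases le_or_gt 1 q with hpos | hneg
  · rw [lie_eq_whittakerStar_add χ]
    refine add_mem (Submodule.mem_iSup_of_mem d ?_) (Submodule.mem_iSup_of_mem d ?_)
    · exact whittakerStar_mem_whittakerFiltration hg hwhit hpos hx
        (whittakerFiltration_mono d.le_succ hv)
    · exact Submodule.smul_mem _ _ hv
  · have hk : q = -((-q).toNat : ℕ) := by omega
    rw [hk] at hx
    exact Submodule.mem_iSup_of_mem _ (lie_mem_whittakerFiltration hx hv)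

lemma lie_mem_iSup_whittakerFiltration
    (hg : ∀ p q x y, x ∈ g p → y ∈ g q → ⁅x, y⁆ ∈ g (p + q))
    (hwhit : ∀ p, 1 ≤ p → ∀ x ∈ g p, ⁅x, w⁆ = χ x • w)
    (hspan : ⨆ q, g q = ⊤) (x : G) {v : V}
    (hv : v ∈ ⨆ d, whittakerFiltration g w d) : ⁅x, v⁆ ∈ ⨆ d, whittakerFiltration g w d := by
  have hx : x ∈ ⨆ q, g q := hspan ▸ Submodule.mem_top
  induction hv using Submodule.iSup_induction' with
  | mem d v hv =>
    induction hx using Submodule.iSup_induction' with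
    | mem q x hx => exact lie_mem_iSup_whittakerFiltration_of_mem hg hwhit hx hv
    | zero => rw [zero_lie]; exact zero_mem _
    | add x x' _ _ hx hx' => rw [add_lie]; exact add_mem hx hx'
  | zero => rw [lie_zero]; exact zero_mem _
  | add v v' _ _ hv hv' => rw [lie_add]; exact add_mem hv hv'

lemma exists_mem_whittakerFiltration
    (hg : ∀ p q x y, x ∈ g p → y ∈ g q → ⁅x, y⁆ ∈ g (p + q))
    (hwhit : ∀ p, 1 ≤ p → ∀ x ∈ g p, ⁅x, w⁆ = χ x • w)
    (hspan : ⨆ q, g q = ⊤)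
    (hcyc : LieSubmodule.lieSpan R G {w} = ⊤) (v : V) :
    ∃ d, v ∈ whittakerFiltration g w d := by
  refine (Submodule.mem_iSup_of_directed _ whittakerFiltration_mono.directed_le).mp ?_
  have hv : v ∈ LieSubmodule.lieSpan R G {w} := hcyc ▸ LieSubmodule.mem_top v
  induction hv using LieSubmodule.lieSpan_induction with
  | mem u hu =>
    rw [Set.mem_singleton_iff.mp hu]
    exact Submodule.mem_iSup_of_mem 1 IsNegMonomial.base.mem_whittakerFiltration
  | zero => exact zero_mem _
  | add u u' _ _ hu hu' => exact add_mem hu hu'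
  | smul c u _ hu => exact Submodule.smul_mem _ c hu
  | lie x u _ hu => exact lie_mem_iSup_whittakerFiltration hg hwhit hspan x hu

theorem exists_iterate_whittakerStar_eq_zero
    (hg : ∀ p q x y, x ∈ g p → y ∈ g q → ⁅x, y⁆ ∈ g (p + q))
    (hwhit : ∀ p, 1 ≤ p → ∀ x ∈ g p, ⁅x, w⁆ = χ x • w)
    (hspan : ⨆ q, g q = ⊤)
    (hcyc : LieSubmodule.lieSpan R G {w} = ⊤) {p : ℤ} (hp : 1 ≤ p) {y : G} (hy : y ∈ g p)
    (v : V) : ∃ d, (whittakerStar V χ y)^[d] v = 0 :=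
  (exists_mem_whittakerFiltration hg hwhit hspan hcyc v).imp fun _ =>
    iterate_whittakerStar_eq_zero hg hwhit hp hy

end GradedWhittaker

section PGCA

open GIdx

variable {G : Type*} [LieRing G] [LieAlgebra ℂ G] {b : Module.Basis GIdx ℂ G}

variable (b) in
def pgcaPiece (q : ℤ) : Submodule ℂ G :=
  Submodule.span ℂ {b (L q), b (H q), b (I q), b (J q)}

lemma mem_pgcaPiece_of_eq {q : ℤ} {x : G}
    (hx : x = b (L q) ∨ x = b (H q) ∨ x = b (I q) ∨ x = b (J q)) : x ∈ pgcaPiece b q :=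
  Submodule.subset_span (by simpa only [Set.mem_insert_iff, Set.mem_singleton_iff] using hx)

lemma IsPGCA.lie_basis_mem_pgcaPiece (hb : IsPGCA G b) {p q : ℤ} {x y : G}
    (hx : x = b (L p) ∨ x = b (H p) ∨ x = b (I p) ∨ x = b (J p))
    (hy : y = b (L q) ∨ y = b (H q) ∨ y = b (I q) ∨ y = b (J q)) :
    ⁅x, y⁆ ∈ pgcaPiece b (p + q) := by
  have L_mem := fun k => mem_pgcaPiece_of_eq (b := b) (q := k) (Or.inl rfl)
  have H_mem := fun k => mem_pgcaPiece_of_eq (b := b) (q := k) (Or.inr (Or.inl rfl))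
  have I_mem := fun k => mem_pgcaPiece_of_eq (b := b) (q := k) (Or.inr (Or.inr (Or.inl rfl)))
  have J_mem := fun k => mem_pgcaPiece_of_eq (b := b) (q := k) (Or.inr (Or.inr (Or.inr rfl)))
  rcases hx with rfl | rfl | rfl | rfl <;> rcases hy with rfl | rfl | rfl | rfl <;>
    first
    | rw [hb.lie_LL] | rw [hb.lie_LH] | rw [hb.lie_LI] | rw [hb.lie_LJ] | rw [hb.lie_HI]
    | rw [hb.lie_HJ] | rw [hb.lie_HH] | rw [hb.lie_II] | rw [hb.lie_IJ] | rw [hb.lie_JJ]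
    | rw [← lie_skew, hb.lie_LH] | rw [← lie_skew, hb.lie_LI] | rw [← lie_skew, hb.lie_LJ]
    | rw [← lie_skew, hb.lie_HI] | rw [← lie_skew, hb.lie_HJ] | rw [← lie_skew, hb.lie_IJ]
  all_goals
    try rw [add_comm q p]
    apply_rules [Submodule.smul_mem, neg_mem, zero_mem]

lemma IsPGCA.lie_mem_pgcaPiece (hb : IsPGCA G b) (p q : ℤ) (x y : G)
    (hx : x ∈ pgcaPiece b p) (hy : y ∈ pgcaPiece b q) : ⁅x, y⁆ ∈ pgcaPiece b (p + q) := by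
  let bracket : G →ₗ[ℂ] G →ₗ[ℂ] G := LieModule.toEnd ℂ G G
  have hmap : Submodule.map₂ bracket (pgcaPiece b p) (pgcaPiece b q) ≤ pgcaPiece b (p + q) := by
    rw [pgcaPiece, pgcaPiece, Submodule.map₂_span_span, Submodule.span_le]
    rintro _ ⟨x, hx, y, hy, rfl⟩
    simp only [Set.mem_insert_iff, Set.mem_singleton_iff] at hx hy
    exact hb.lie_basis_mem_pgcaPiece hx hy
  exact hmap (Submodule.apply_mem_map₂ bracket hx hy)

lemma iSup_pgcaPiece : ⨆ q, pgcaPiece b q = ⊤ := by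
  rw [eq_top_iff, ← b.span_eq, Submodule.span_le]
  rintro _ ⟨i, rfl⟩
  rcases i with q | q | q | q <;>
    exact Submodule.mem_iSup_of_mem q (mem_pgcaPiece_of_eq (by simp))

lemma pgcaPiece_le_span_pgcaPosSet {q : ℤ} (hq : 1 ≤ q) :
    pgcaPiece b q ≤ Submodule.span ℂ (pgcaPosSet b) :=
  Submodule.span_mono fun x hx => ⟨q, hq, by simpa only [Set.mem_insert_iff,
    Set.mem_singleton_iff] using hx⟩

end PGCA

/-- On a Whittaker `𝒢`-module `V` of type `φ` with cyclic Whittaker vector `w`, each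
`E_n ∈ {L_n, H_n, I_n, J_n}` (`n ≥ 1`) acts locally nilpotently under the modified star
action `x ⋆ v = x·v − φ(x)v`. -/
theorem whittaker_star_locally_nilpotent {G : Type*} [LieRing G] [LieAlgebra ℂ G]
    (b : Module.Basis GIdx ℂ G) (hb : IsPGCA G b)
    (Gp : LieSubalgebra ℂ G) (hGp : (Gp : Submodule ℂ G) = Submodule.span ℂ (pgcaPosSet b))
    (φ : Gp →ₗ⁅ℂ⁆ ℂ)
    (V : Type*) [AddCommGroup V] [Module ℂ V] [LieRingModule G V] [LieModule ℂ G V]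
    (w : V)
    (hwhit : ∀ x : Gp, ⁅(x : G), w⁆ = φ x • w)
    (hcyc : LieSubmodule.lieSpan ℂ G {w} = ⊤) :
    ∀ n : ℤ, 1 ≤ n → ∀ e : Gp,
      ((e : G) = b (GIdx.L n) ∨ (e : G) = b (GIdx.H n) ∨
        (e : G) = b (GIdx.I n) ∨ (e : G) = b (GIdx.J n)) →
      ∀ v : V, ∃ p : ℕ, (fun u => ⁅(e : G), u⁆ - φ e • u)^[p] v = 0 := by
  intro n hn e he v
  classical
  let χ : G → ℂ := fun x => if h : x ∈ Gp then φ ⟨x, h⟩ else 0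
  have hχ : ∀ x : Gp, χ x = φ x := fun x => dif_pos x.2
  have hGp_piece : ∀ q, 1 ≤ q → ∀ x ∈ pgcaPiece b q, x ∈ Gp := fun q hq x hx => by
    rw [← LieSubalgebra.mem_toSubmodule, hGp]
    exact pgcaPiece_le_span_pgcaPosSet hq hx
  have hwhitχ : ∀ q, 1 ≤ q → ∀ x ∈ pgcaPiece b q, ⁅x, w⁆ = χ x • w := fun q hq x hx =>
    (hwhit ⟨x, hGp_piece q hq x hx⟩).trans (congrArg (· • w) (hχ _).symm)
  have hstar : ⇑(whittakerStar V χ e) = fun u => ⁅(e : G), u⁆ - φ e • u :=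
    funext fun u => by rw [whittakerStar_apply, hχ]
  rw [← hstar]
  exact exists_iterate_whittakerStar_eq_zero hb.lie_mem_pgcaPiece hwhitχ iSup_pgcaPiece hcyc hn
    (mem_pgcaPiece_of_eq he) v
end

section
/- Let φ : 𝒢⁺ → ℂ be a Lie algebra homomorphism and V a Whittaker 𝒢-module of type φ. For any v ∈ V, the subspace U(𝒢⁺) ⋆ v (the span of iterated star-action images of v under 𝒢⁺, where x ⋆ u = x·u − φ(x)u) is a finite-dimensional 𝒢⁺-submodule of V under the star action. -/
attribute [local instance 100] LieRing.ofAssociativeRing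

/-!
Grade `𝒢` by the index of the basis vectors and give a word `b i₁ ⋯ b iₖ · w` in basis
vectors of nonpositive degree the weight `∑ (1 - deg iⱼ)`. Words of weight at most `n` span a
subspace `Wₙ`, finite-dimensional since each degree has finitely many basis vectors and every
letter costs weight at least one. A positive basis vector `b j` maps `Wₙ` into itself: moving it
to the right through the word produces commutators `⁅b j, b i⁆` of degree `deg j + deg i > deg i`,
which are either cheaper nonpositive letters or again positive, and at the end `b j` meets `w`,
on which it acts by the scalar `φ (b j)`. Hence the `Wₙ` exhaust the `𝒢`-submodule generated by
`w`, which is `V`; and a subspace stable under `𝒢⁺` is stable under the star action.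
-/

namespace Whittaker

open Submodule

section Words

variable {ι : Type*} (deg : ι → ℤ)

def weight (l : List ι) : ℤ := (l.map fun i => 1 - deg i).sum

def nonposWords (n : ℤ) : Set (List ι) :=
  {l | (∀ i ∈ l, deg i ≤ 0) ∧ weight deg l ≤ n}

@[simp] lemma weight_cons (i : ι) (l : List ι) :
    weight deg (i :: l) = 1 - deg i + weight deg l := by
  simp [weight]

variable {deg}

lemma length_le_weight {l : List ι} (hl : ∀ i ∈ l, deg i ≤ 0) :
    (l.length : ℤ) ≤ weight deg l := by
  simpa [weight] using
    List.card_nsmul_le_sum (l.map fun i => 1 - deg i) 1 (by simpa using by omega)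

lemma one_sub_deg_le_weight {l : List ι} (hl : ∀ i ∈ l, deg i ≤ 0) {i : ι} (hi : i ∈ l) :
    1 - deg i ≤ weight deg l :=
  List.single_le_sum (by simpa using fun j hj => by have := hl j hj; omega) _
    (List.mem_map_of_mem hi)

lemma _root_.List.finite_setOf_forall_mem_length_le {α : Type*} {s : Set α} (hs : s.Finite)
    (n : ℕ) : {l : List α | (∀ x ∈ l, x ∈ s) ∧ l.length ≤ n}.Finite := by
  have := hs.to_subtype
  refine ((List.finite_length_le s n).image (List.map Subtype.val)).subset ?_
  rintro l ⟨hl, hlen⟩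
  lift l to List s using hl
  exact ⟨l, by simpa using hlen, rfl⟩

lemma finite_nonposWords (hdeg : ∀ d, (deg ⁻¹' {d}).Finite) (n : ℤ) :
    (nonposWords deg n).Finite := by
  have hletters : (deg ⁻¹' Set.Icc (1 - n) 0).Finite :=
    (Set.finite_Icc _ _).preimage' fun d _ => hdeg d
  refine (List.finite_setOf_forall_mem_length_le hletters n.toNat).subset ?_
  rintro l ⟨hl, hn⟩
  refine ⟨fun i hi => ⟨?_, hl i hi⟩, ?_⟩
  · have := one_sub_deg_le_weight hl hi
    omega
  · have := length_le_weight hl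
    omega

end Words

section Filtration

variable (R : Type*) {ι G V : Type*} [CommRing R] [LieRing G]
  [AddCommGroup V] [Module R V] [LieRingModule G V] (b : ι → G) (deg : ι → ℤ) (w : V)

def lieWord (l : List ι) : V := l.foldr (fun i u => ⁅b i, u⁆) w

def filtration (n : ℤ) : Submodule R V := span R (lieWord b w '' nonposWords deg n)

@[simp] lemma lieWord_cons (i : ι) (l : List ι) :
    lieWord b w (i :: l) = ⁅b i, lieWord b w l⁆ := rfl

variable {R b deg w}

lemma filtration_mono : Monotone (filtration R b deg w) := fun _ _ hnm =>
  span_mono <| Set.image_mono fun _ ⟨hl, hn⟩ => ⟨hl, hn.trans hnm⟩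

lemma lieWord_mem_filtration {l : List ι} (hl : ∀ i ∈ l, deg i ≤ 0) {n : ℤ}
    (hn : weight deg l ≤ n) : lieWord b w l ∈ filtration R b deg w n :=
  subset_span ⟨l, ⟨hl, hn⟩, rfl⟩

lemma finite_filtration (hdeg : ∀ d, (deg ⁻¹' {d}).Finite) (n : ℤ) :
    Module.Finite R (filtration R b deg w n) :=
  Module.Finite.span_of_finite R ((finite_nonposWords hdeg n).image _)

variable [LieAlgebra R G] [LieModule R G V]

lemma lie_mem_of_mem_span {s : Set G} {u : V} {W : Submodule R V} (hs : ∀ x ∈ s, ⁅x, u⁆ ∈ W)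
    {x : G} (hx : x ∈ span R s) : ⁅x, u⁆ ∈ W := by
  induction hx using Submodule.span_induction with
  | mem x hx => exact hs x hx
  | zero => simp
  | add x y _ _ hx hy => simpa only [add_lie] using add_mem hx hy
  | smul c x _ hx => simpa only [smul_lie] using W.smul_mem c hx

lemma lie_mem_filtration_of_deg_nonpos {i : ι} (hi : deg i ≤ 0) {n : ℤ} {u : V}
    (hu : u ∈ filtration R b deg w n) : ⁅b i, u⁆ ∈ filtration R b deg w (1 - deg i + n) := by
  have : filtration R b deg w n ≤
      (filtration R b deg w (1 - deg i + n)).comap (LieModule.toEnd R G V (b i)) := by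
    refine span_le.mpr ?_
    rintro _ ⟨l, ⟨hl, hn⟩, rfl⟩
    refine lieWord_mem_filtration (l := i :: l) ?_ (by simpa using hn)
    simpa [hi] using hl
  simpa using this hu

variable (hgr : ∀ i j, ⁅b i, b j⁆ ∈ span R (b '' {k | deg k = deg i + deg j}))
  (hw : ∀ i, 0 < deg i → ⁅b i, w⁆ ∈ R ∙ w)
include hgr hw

lemma lie_lieWord_mem_filtration_of_deg_pos {l : List ι} (hl : ∀ i ∈ l, deg i ≤ 0) {j : ι}
    (hj : 0 < deg j) : ⁅b j, lieWord b w l⁆ ∈ filtration R b deg w (weight deg l) := by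
  induction l generalizing j with
  | nil => exact (span_singleton_le_iff_mem _ _).mpr (lieWord_mem_filtration hl le_rfl) (hw j hj)
  | cons i l ih =>
    simp only [List.forall_mem_cons] at hl
    obtain ⟨hi, hl⟩ := hl
    rw [lieWord_cons, leibniz_lie, weight_cons]
    refine add_mem (lie_mem_of_mem_span ?_ (hgr j i))
      (lie_mem_filtration_of_deg_nonpos hi (ih hl hj))
    rintro _ ⟨k, hk, rfl⟩
    -- `deg k > deg i`: either `b k` is a cheaper letter than `b i`, or it is positive again
    rcases le_or_gt (deg k) 0 with hk₀ | hk₀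
    · exact lieWord_mem_filtration (l := k :: l) (by simpa [hk₀] using hl)
        (by simp only [weight_cons, Set.mem_ofPred_eq] at hk ⊢; omega)
    · exact filtration_mono (by omega) (ih hl hk₀)

lemma lie_mem_filtration_of_deg_pos {j : ι} (hj : 0 < deg j) {n : ℤ} {u : V}
    (hu : u ∈ filtration R b deg w n) : ⁅b j, u⁆ ∈ filtration R b deg w n := by
  have : filtration R b deg w n ≤
      (filtration R b deg w n).comap (LieModule.toEnd R G V (b j)) := by
    refine span_le.mpr ?_
    rintro _ ⟨l, ⟨hl, hn⟩, rfl⟩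
    exact filtration_mono hn (lie_lieWord_mem_filtration_of_deg_pos hgr hw hl hj)
  simpa using this hu

lemma lie_mem_filtration_of_mem_span_pos {x : G} (hx : x ∈ span R (b '' {i | 0 < deg i}))
    {n : ℤ} {u : V} (hu : u ∈ filtration R b deg w n) : ⁅x, u⁆ ∈ filtration R b deg w n :=
  lie_mem_of_mem_span
    (by rintro _ ⟨j, hj, rfl⟩; exact lie_mem_filtration_of_deg_pos hgr hw hj hu) hx

lemma lie_mem_iSup_filtration (hb : span R (Set.range b) = ⊤) (x : G) {u : V}
    (hu : u ∈ ⨆ n, filtration R b deg w n) : ⁅x, u⁆ ∈ ⨆ n, filtration R b deg w n := by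
  obtain ⟨n, hn⟩ := (mem_iSup_of_directed _ filtration_mono.directed_le).mp hu
  refine lie_mem_of_mem_span ?_ (hb ▸ mem_top : x ∈ span R (Set.range b))
  rintro _ ⟨i, rfl⟩
  rcases le_or_gt (deg i) 0 with hi | hi
  · exact mem_iSup_of_mem _ (lie_mem_filtration_of_deg_nonpos hi hn)
  · exact mem_iSup_of_mem _ (lie_mem_filtration_of_deg_pos hgr hw hi hn)

lemma exists_mem_filtration (hb : span R (Set.range b) = ⊤)
    (hcyc : LieSubmodule.lieSpan R G {w} = ⊤) (v : V) : ∃ n, v ∈ filtration R b deg w n := by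
  let U : LieSubmodule R G V :=
    { toSubmodule := ⨆ n, filtration R b deg w n
      lie_mem := lie_mem_iSup_filtration hgr hw hb _ }
  have hwU : w ∈ U := mem_iSup_of_mem 0 (lieWord_mem_filtration (l := []) (by simp) le_rfl)
  have hvU : v ∈ U :=
    LieSubmodule.lieSpan_le.mpr (Set.singleton_subset_iff.mpr hwU) (hcyc ▸ LieSubmodule.mem_top v)
  exact (mem_iSup_of_directed _ filtration_mono.directed_le).mp hvU

end Filtration

end Whittaker

namespace GIdx

def deg : GIdx → ℤ
  | L n => n
  | H n => n
  | I n => n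
  | J n => n

lemma finite_deg_preimage (d : ℤ) : (deg ⁻¹' {d}).Finite :=
  (Set.toFinite {L d, H d, I d, J d}).subset <| by rintro (n | n | n | n) rfl <;> simp [deg]

end GIdx

section PGCA

open GIdx

variable {G : Type*} [LieRing G] [LieAlgebra ℂ G] {b : Module.Basis GIdx ℂ G}

lemma pgcaPosSet_eq_image : pgcaPosSet b = b '' {i | 0 < i.deg} := by
  ext x
  constructor
  · rintro ⟨m, hm, rfl | rfl | rfl | rfl⟩ <;>
      exact ⟨_, by simp only [Set.mem_ofPred_eq, deg]; omega, rfl⟩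
  · rintro ⟨i | i | i | i, hi, rfl⟩ <;> exact ⟨i, hi, by simp⟩

lemma IsPGCA.lie_mem_span (hb : IsPGCA G b) (i j : GIdx) :
    ⁅b i, b j⁆ ∈ Submodule.span ℂ (b '' {k | k.deg = i.deg + j.deg}) := by
  have hmem (k : GIdx) (hk : k.deg = i.deg + j.deg) :
      b k ∈ Submodule.span ℂ (b '' {k | k.deg = i.deg + j.deg}) :=
    Submodule.subset_span ⟨k, hk, rfl⟩
  rcases i with n | n | n | n <;> rcases j with m | m | m | m <;>
    (first
      | rw [hb.lie_LL] | rw [hb.lie_LH] | rw [hb.lie_LI] | rw [hb.lie_LJ]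
      | rw [hb.lie_HI] | rw [hb.lie_HJ] | rw [hb.lie_HH] | rw [hb.lie_II] | rw [hb.lie_IJ]
      | rw [hb.lie_JJ]
      | rw [← lie_skew, hb.lie_LH] | rw [← lie_skew, hb.lie_LI] | rw [← lie_skew, hb.lie_LJ]
      | rw [← lie_skew, hb.lie_HI] | rw [← lie_skew, hb.lie_HJ] | rw [← lie_skew, hb.lie_IJ]) <;>
    apply_rules [Submodule.smul_mem, Submodule.neg_mem, Submodule.zero_mem, hmem] <;>
    simp only [deg] <;> ring

end PGCA

open Whittaker GIdx in
/-- For any Whittaker `𝒢`-module `V` of type `φ` and any `v ∈ V`, the subspace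
`U(𝒢⁺) ⋆ v` is a finite-dimensional `𝒢⁺`-submodule of `V` under the star action
`x ⋆ u = x·u − φ(x)u`; equivalently, `v` lies in a finite-dimensional subspace stable
under all star operators. -/
theorem whittaker_star_orbit_finiteDimensional {G : Type*} [LieRing G] [LieAlgebra ℂ G]
    (b : Module.Basis GIdx ℂ G) (hb : IsPGCA G b)
    (Gp : LieSubalgebra ℂ G) (hGp : (Gp : Submodule ℂ G) = Submodule.span ℂ (pgcaPosSet b))
    (φ : Gp →ₗ⁅ℂ⁆ ℂ)
    (V : Type*) [AddCommGroup V] [Module ℂ V] [LieRingModule G V] [LieModule ℂ G V]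
    (w : V)
    (hwhit : ∀ x : Gp, ⁅(x : G), w⁆ = φ x • w)
    (hcyc : LieSubmodule.lieSpan ℂ G {w} = ⊤)
    (v : V) :
    ∃ W : Submodule ℂ V, v ∈ W ∧ FiniteDimensional ℂ W ∧
      ∀ x : Gp, ∀ u ∈ W, ⁅(x : G), u⁆ - φ x • u ∈ W := by
  have hGp' : (Gp : Submodule ℂ G) = Submodule.span ℂ (b '' {i | 0 < i.deg}) := by
    rw [hGp, pgcaPosSet_eq_image]
  have hw (i : GIdx) (hi : 0 < i.deg) : ⁅b i, w⁆ ∈ ℂ ∙ w := by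
    have hi : b i ∈ Gp :=
      (LieSubalgebra.mem_toSubmodule Gp).mp (hGp' ▸ Submodule.subset_span ⟨i, hi, rfl⟩)
    exact Submodule.mem_span_singleton.mpr ⟨φ ⟨b i, hi⟩, (hwhit ⟨b i, hi⟩).symm⟩
  obtain ⟨n, hn⟩ := exists_mem_filtration hb.lie_mem_span hw b.span_eq hcyc v
  refine ⟨filtration ℂ b deg w n, hn, finite_filtration finite_deg_preimage n, fun x u hu => ?_⟩
  exact sub_mem (lie_mem_filtration_of_mem_span_pos hb.lie_mem_span hw (hGp' ▸ x.2) hu)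
    (Submodule.smul_mem _ _ hu)
end

section
/- Let φ : 𝒢⁺ → ℂ be a Lie algebra homomorphism, V a Whittaker 𝒢-module of type φ, and S ⊆ V a nonzero 𝒢-submodule. Then S contains a nonzero Whittaker vector, i.e., a nonzero w' ∈ S with x·w' = ψ(x)w' for some Lie algebra homomorphism ψ : 𝒢⁺ → ℂ and all x ∈ 𝒢⁺. -/
attribute [local instance 100] LieRing.ofAssociativeRing

/-!
Let `V(n, d)` be the span of the monomials `b_{i₁} ⋯ b_{iₖ} · w` with `k ≤ n` and total degree
`≥ d`; every vector lies in some `V(n, d)`. For `x ∈ 𝒢⁺` the twisted action `v ↦ x·v - φ(x)v`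
maps `V(n, d)` into `V(n, d + 1)`: moving `x` to the right through a monomial only produces
commutators, each of which raises the degree, and at the right end `x` meets `w` and is absorbed
by `-φ(x)`. Since the basis vectors of degree `≥ 3` are commutators in `𝒢⁺`, `φ` kills them, and
induction on `n` gives `V(n, d) = 0` for `d > 2n`. So if a nonzero `v ∈ S` lies in `V(n, d)`,
there is a largest `e` with `V(n, e) ∩ S ≠ 0`, and a nonzero `u` in it satisfies
`x·u - φ(x)u ∈ V(n, e + 1) ∩ S = 0`: it is a Whittaker vector of type `φ` itself.
-/

section Monomials

variable {ι G V : Type*} [LieRing G] [AddCommGroup V] [LieRingModule G V]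
  (R : Type*) [CommRing R] [Module R V] (b : ι → G) (deg : ι → ℤ)

def lieMonomial (l : List ι) (v : V) : V := l.foldr (fun i u => ⁅b i, u⁆) v

@[simp]
theorem lieMonomial_nil (v : V) : lieMonomial b [] v = v := rfl

@[simp]
theorem lieMonomial_cons (i : ι) (l : List ι) (v : V) :
    lieMonomial b (i :: l) v = ⁅b i, lieMonomial b l v⁆ := rfl

def monomialSpan (w : V) (n : ℕ) (d : ℤ) : Submodule R V :=
  Submodule.span R {v | ∃ l : List ι, l.length ≤ n ∧ d ≤ (l.map deg).sum ∧ lieMonomial b l w = v}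

variable {R b deg}

theorem lieMonomial_mem_monomialSpan (w : V) (l : List ι) :
    lieMonomial b l w ∈ monomialSpan R b deg w l.length (l.map deg).sum :=
  Submodule.subset_span ⟨l, le_rfl, le_rfl, rfl⟩

theorem monomialSpan_mono (w : V) {n n' : ℕ} {d d' : ℤ} (hn : n ≤ n') (hd : d' ≤ d) :
    monomialSpan R b deg w n d ≤ monomialSpan R b deg w n' d' :=
  Submodule.span_mono fun _ ⟨l, hl, hdl, hv⟩ => ⟨l, hl.trans hn, hd.trans hdl, hv⟩

end Monomials

section LieModule

variable {R ι G V : Type*} [CommRing R] [LieRing G] [LieAlgebra R G]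
  [AddCommGroup V] [Module R V] [LieRingModule G V] [LieModule R G V]

theorem lie_mem_of_mem_span {s : Set G} {t : Set V} {M : Submodule R V}
    (h : ∀ x ∈ s, ∀ v ∈ t, ⁅x, v⁆ ∈ M) {x : G} {v : V}
    (hx : x ∈ Submodule.span R s) (hv : v ∈ Submodule.span R t) : ⁅x, v⁆ ∈ M := by
  have hmem := Submodule.apply_mem_map₂ (LieModule.toEnd R G V : G →ₗ[R] Module.End R V) hx hv
  rw [Submodule.map₂_span_span] at hmem
  refine Submodule.span_le.mpr ?_ hmem
  rintro _ ⟨x, hx, v, hv, rfl⟩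
  exact h x hx v hv

variable {b : ι → G} {deg : ι → ℤ}

variable (R b deg) in
def degreeFiltration (a : ℤ) : Submodule R G :=
  Submodule.span R (b '' {i | a ≤ deg i})

theorem degreeFiltration_anti {a a' : ℤ} (h : a ≤ a') :
    degreeFiltration R b deg a' ≤ degreeFiltration R b deg a :=
  Submodule.span_mono (Set.image_mono fun _ hi => h.trans hi)

theorem lieSubalgebra_mem_of_eq_degreeFiltration {P : LieSubalgebra R G} {a : ℤ}
    (hP : (P : Submodule R G) = degreeFiltration R b deg a) {i : ι} (hi : a ≤ deg i) : b i ∈ P := by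
  rw [← LieSubalgebra.mem_toSubmodule, hP]
  exact Submodule.subset_span ⟨i, hi, rfl⟩

theorem lie_mem_degreeFiltration_add
    (hbr : ∀ i j, ⁅b i, b j⁆ ∈ degreeFiltration R b deg (deg i + deg j))
    {a : ℤ} {x : G} (hx : x ∈ degreeFiltration R b deg a) (j : ι) :
    ⁅x, b j⁆ ∈ degreeFiltration R b deg (a + deg j) := by
  refine lie_mem_of_mem_span ?_ hx (Submodule.subset_span (Set.mem_singleton (b j)))
  rintro _ ⟨i, hi, rfl⟩ _ rfl
  have hi : a ≤ deg i := hi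
  exact degreeFiltration_anti (by omega) (hbr i j)

theorem lie_mem_monomialSpan {w : V} {a d : ℤ} {n : ℕ} {x : G} {v : V}
    (hx : x ∈ degreeFiltration R b deg a) (hv : v ∈ monomialSpan R b deg w n d) :
    ⁅x, v⁆ ∈ monomialSpan R b deg w (n + 1) (d + a) := by
  refine lie_mem_of_mem_span ?_ hx hv
  rintro _ ⟨i, hi, rfl⟩ _ ⟨l, hl, hdl, rfl⟩
  refine Submodule.subset_span ⟨i :: l, by simpa using hl, ?_, rfl⟩
  have : a ≤ deg i := hi
  simp only [List.map_cons, List.sum_cons]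
  omega

theorem span_lieMonomial_eq_top {w : V}
    (hspan : Submodule.span R (Set.range b) = ⊤) (hcyc : LieSubmodule.lieSpan R G {w} = ⊤) :
    Submodule.span R (Set.range fun l => lieMonomial b l w) = ⊤ := by
  let M : LieSubmodule R G V :=
    { Submodule.span R (Set.range fun l => lieMonomial b l w) with
      lie_mem := fun {x u} hu => lie_mem_of_mem_span
        (by rintro _ ⟨i, rfl⟩ _ ⟨l, rfl⟩; exact Submodule.subset_span ⟨i :: l, rfl⟩)
        (hspan ▸ Submodule.mem_top : x ∈ Submodule.span R (Set.range b)) hu }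
  have hM : LieSubmodule.lieSpan R G {w} ≤ M :=
    LieSubmodule.lieSpan_le.mpr (Set.singleton_subset_iff.mpr (Submodule.subset_span ⟨[], rfl⟩))
  rw [hcyc, top_le_iff] at hM
  exact congrArg LieSubmodule.toSubmodule hM

theorem exists_mem_monomialSpan {w : V}
    (hspan : Submodule.span R (Set.range b) = ⊤) (hcyc : LieSubmodule.lieSpan R G {w} = ⊤)
    (v : V) : ∃ n d, v ∈ monomialSpan R b deg w n d := by
  have hv : v ∈ Submodule.span R (Set.range fun l => lieMonomial b l w) := by
    rw [span_lieMonomial_eq_top hspan hcyc]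
    trivial
  induction hv using Submodule.span_induction with
  | mem _ h =>
    obtain ⟨l, rfl⟩ := h
    exact ⟨_, _, lieMonomial_mem_monomialSpan w l⟩
  | zero => exact ⟨0, 0, zero_mem _⟩
  | add u v _ _ hu hv =>
    obtain ⟨n, d, hu⟩ := hu
    obtain ⟨n', d', hv⟩ := hv
    exact ⟨max n n', min d d', add_mem
      (monomialSpan_mono w (le_max_left _ _) (min_le_left _ _) hu)
      (monomialSpan_mono w (le_max_right _ _) (min_le_right _ _) hv)⟩
  | smul c u _ hu =>
    obtain ⟨n, d, hu⟩ := hu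
    exact ⟨n, d, Submodule.smul_mem _ c hu⟩

section Whittaker

variable {P : LieSubalgebra R G} {φ : P →ₗ⁅R⁆ R} {w : V}
  (hbr : ∀ i j, ⁅b i, b j⁆ ∈ degreeFiltration R b deg (deg i + deg j))
  (hw : ∀ x : P, ⁅(x : G), w⁆ = φ x • w)
include hbr hw

theorem lie_lieMonomial_sub_smul_mem {a : ℤ} (x : P)
    (hx : (x : G) ∈ degreeFiltration R b deg a) (l : List ι) :
    ⁅(x : G), lieMonomial b l w⁆ - φ x • lieMonomial b l w ∈
      monomialSpan R b deg w l.length ((l.map deg).sum + a) := by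
  induction l with
  | nil => simp [hw]
  | cons j l ih =>
    have hsplit : ⁅(x : G), lieMonomial b (j :: l) w⁆ - φ x • lieMonomial b (j :: l) w =
        ⁅⁅(x : G), b j⁆, lieMonomial b l w⁆ +
          ⁅b j, ⁅(x : G), lieMonomial b l w⁆ - φ x • lieMonomial b l w⁆ := by
      rw [lieMonomial_cons, leibniz_lie, lie_sub, lie_smul]
      abel
    rw [hsplit, List.length_cons, List.map_cons, List.sum_cons]
    refine add_mem ?_ ?_
    · convert lie_mem_monomialSpan (lie_mem_degreeFiltration_add hbr hx j)
        (lieMonomial_mem_monomialSpan (R := R) (deg := deg) w l) using 2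
      ring
    · convert lie_mem_monomialSpan
        (Submodule.subset_span ⟨j, show deg j ≤ deg j from le_rfl, rfl⟩) ih using 2
      ring

theorem lie_sub_smul_mem_monomialSpan {a d : ℤ} {n : ℕ} (x : P)
    (hx : (x : G) ∈ degreeFiltration R b deg a) {v : V} (hv : v ∈ monomialSpan R b deg w n d) :
    ⁅(x : G), v⁆ - φ x • v ∈ monomialSpan R b deg w n (d + a) := by
  let f : V →ₗ[R] V := LieModule.toEnd R G V x - φ x • LinearMap.id
  suffices monomialSpan R b deg w n d ≤ (monomialSpan R b deg w n (d + a)).comap f from this hv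
  refine Submodule.span_le.mpr ?_
  rintro _ ⟨l, hl, hdl, rfl⟩
  exact monomialSpan_mono w hl (by omega) (lie_lieMonomial_sub_smul_mem hbr hw x hx l)

variable (hP : (P : Submodule R G) = degreeFiltration R b deg 1) {N : ℕ}
  (hφ : ∀ i (hi : b i ∈ P), N < deg i → φ ⟨b i, hi⟩ = 0)
include hP hφ

theorem monomialSpan_eq_bot {n : ℕ} {d : ℤ} (hd : N * n < d) :
    monomialSpan R b deg w n d = ⊥ := by
  induction n generalizing d with
  | zero =>
    refine Submodule.span_eq_bot.mpr ?_
    rintro _ ⟨l, hl, hdl, rfl⟩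
    rw [List.length_eq_zero_iff.mp (Nat.le_zero.mp hl)] at hdl
    simp only [Nat.cast_zero, mul_zero, List.map_nil, List.sum_nil] at hd hdl
    omega
  | succ n ih =>
    refine Submodule.span_eq_bot.mpr ?_
    rintro _ ⟨_ | ⟨j, l⟩, hl, hdl, rfl⟩
    · simp only [List.map_nil, List.sum_nil] at hdl
      push_cast at hd
      nlinarith
    · simp only [List.length_cons, add_le_add_iff_right, List.map_cons, List.sum_cons] at hl hdl
      by_cases hl' : (N : ℤ) * n < (l.map deg).sum
      · rw [lieMonomial_cons, (Submodule.eq_bot_iff _).mp (ih hl') _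
          (monomialSpan_mono w hl le_rfl (lieMonomial_mem_monomialSpan w l)), lie_zero]
      · push_cast at hd
        have hj : (N : ℤ) < deg j := by linarith
        have hbj : b j ∈ P := lieSubalgebra_mem_of_eq_degreeFiltration hP (by omega)
        have hmem := lie_lieMonomial_sub_smul_mem hbr hw ⟨b j, hbj⟩
          (Submodule.subset_span ⟨j, show deg j ≤ deg j from le_rfl, rfl⟩) l
        rw [hφ j hbj hj, zero_smul, sub_zero] at hmem
        have hmem' := monomialSpan_mono w hl le_rfl hmem
        rw [ih (by linarith)] at hmem'
        exact (Submodule.mem_bot R).mp hmem'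

theorem exists_whittaker_vector_of_graded
    (hspan : Submodule.span R (Set.range b) = ⊤) (hcyc : LieSubmodule.lieSpan R G {w} = ⊤)
    (S : LieSubmodule R G V) (hS : S ≠ ⊥) :
    ∃ u ∈ S, u ≠ 0 ∧ ∀ x : P, ⁅(x : G), u⁆ = φ x • u := by
  obtain ⟨v, hvS, hv0⟩ := (Submodule.ne_bot_iff S.toSubmodule).mp
    (by rwa [ne_eq, LieSubmodule.toSubmodule_eq_bot])
  obtain ⟨n, d, hv⟩ := exists_mem_monomialSpan hspan hcyc v
  obtain ⟨e, he, he_max⟩ := Int.exists_greatest_of_bdd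
    (P := fun e => monomialSpan R b deg w n e ⊓ S.toSubmodule ≠ ⊥)
    ⟨N * n, fun e he => not_lt.mp fun h => he (by
      rw [monomialSpan_eq_bot hbr hw hP hφ h, bot_inf_eq])⟩
    ⟨d, (Submodule.ne_bot_iff _).mpr ⟨v, ⟨hv, hvS⟩, hv0⟩⟩
  obtain ⟨u, ⟨huM, huS⟩, hu0⟩ := (Submodule.ne_bot_iff _).mp he
  have hnext : monomialSpan R b deg w n (e + 1) ⊓ S.toSubmodule = ⊥ :=
    not_not.mp fun h => (he_max _ h).not_gt (lt_add_one e)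
  refine ⟨u, huS, hu0, fun x => ?_⟩
  have hmem : ⁅(x : G), u⁆ - φ x • u ∈ monomialSpan R b deg w n (e + 1) ⊓ S.toSubmodule :=
    ⟨lie_sub_smul_mem_monomialSpan hbr hw x (hP ▸ x.2) huM,
      sub_mem (S.lie_mem huS) (S.toSubmodule.smul_mem _ huS)⟩
  rwa [hnext, Submodule.mem_bot, sub_eq_zero] at hmem

end Whittaker

end LieModule

theorem LieHom.map_eq_zero_of_lie_eq_smul {K L : Type*} [Field K] [LieRing L] [LieAlgebra K L]
    (φ : L →ₗ⁅K⁆ K) {x y z : L} {c : K} (hc : c ≠ 0) (h : ⁅x, y⁆ = c • z) : φ z = 0 := by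
  have : c * φ z = 0 := by
    rw [← smul_eq_mul, ← map_smul, ← h, LieHom.map_lie, Ring.lie_def, mul_comm, sub_self]
  exact (mul_eq_zero.mp this).resolve_left hc

def GIdx.deg_s15 : GIdx → ℤ
  | .L m | .H m | .I m | .J m => m

theorem pgcaPosSet_eq_image_s15 {G : Type*} [LieRing G] [LieAlgebra ℂ G] (b : Module.Basis GIdx ℂ G) :
    pgcaPosSet b = b '' {i | 1 ≤ i.deg_s15} := by
  ext x
  constructor
  · rintro ⟨m, hm, rfl | rfl | rfl | rfl⟩ <;> exact ⟨_, hm, rfl⟩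
  · rintro ⟨_ | _ | _ | _, hi, rfl⟩
    exacts [⟨_, hi, .inl rfl⟩, ⟨_, hi, .inr (.inl rfl)⟩, ⟨_, hi, .inr (.inr (.inl rfl))⟩,
      ⟨_, hi, .inr (.inr (.inr rfl))⟩]

namespace IsPGCA

variable {G : Type*} [LieRing G] [LieAlgebra ℂ G] {b : Module.Basis GIdx ℂ G}

theorem lie_mem_degreeFiltration (hb : IsPGCA G b) (i j : GIdx) :
    ⁅b i, b j⁆ ∈ degreeFiltration ℂ b GIdx.deg_s15 (i.deg_s15 + j.deg_s15) := by
  have hmem : ∀ (c : ℂ) k, i.deg_s15 + j.deg_s15 ≤ k.deg_s15 →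
      c • b k ∈ degreeFiltration ℂ b GIdx.deg_s15 (i.deg_s15 + j.deg_s15) :=
    fun c k hk => Submodule.smul_mem _ c (Submodule.subset_span ⟨k, hk, rfl⟩)
  cases i <;> cases j <;>
    first
    | rw [hb.lie_LL] | rw [hb.lie_LH] | rw [hb.lie_LI] | rw [hb.lie_LJ]
    | rw [hb.lie_HI, ← one_smul ℂ (b _)] | rw [hb.lie_HJ, ← neg_one_smul ℂ (b _)]
    | rw [hb.lie_HH] | rw [hb.lie_II] | rw [hb.lie_IJ] | rw [hb.lie_JJ]
    | rw [← lie_skew, hb.lie_LH, ← neg_smul] | rw [← lie_skew, hb.lie_LI, ← neg_smul]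
    | rw [← lie_skew, hb.lie_LJ, ← neg_smul]
    | rw [← lie_skew, hb.lie_HI, ← neg_one_smul ℂ (b _)]
    | rw [← lie_skew, hb.lie_HJ, neg_neg, ← one_smul ℂ (b _)]
    | rw [← lie_skew, hb.lie_IJ, neg_zero]
  all_goals first | exact zero_mem _ | exact hmem _ _ (by simp only [GIdx.deg_s15]; omega)

theorem exists_lie_eq_smul (hb : IsPGCA G b) {i : GIdx} (hi : 3 ≤ i.deg_s15) :
    ∃ j k : GIdx, ∃ c : ℂ, 1 ≤ j.deg_s15 ∧ 1 ≤ k.deg_s15 ∧ c ≠ 0 ∧ ⁅b j, b k⁆ = c • b i := by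
  rcases i with m | m | m | m <;> simp only [GIdx.deg_s15] at hi
  · refine ⟨.L 1, .L (m - 1), ((m - 1 : ℤ) : ℂ) - (1 : ℤ), le_rfl, show 1 ≤ m - 1 by omega, ?_,
      by rw [hb.lie_LL, sub_add_cancel]⟩
    exact sub_ne_zero.mpr (by exact_mod_cast (show m - 1 ≠ 1 by omega))
  · exact ⟨.L 1, .H (m - 1), ((m - 1 : ℤ) : ℂ), le_rfl, show 1 ≤ m - 1 by omega,
      Int.cast_ne_zero.mpr (by omega), by rw [hb.lie_LH, sub_add_cancel]⟩
  · exact ⟨.H 1, .I (m - 1), 1, le_rfl, show 1 ≤ m - 1 by omega, one_ne_zero,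
      by rw [hb.lie_HI, sub_add_cancel, one_smul]⟩
  · exact ⟨.H 1, .J (m - 1), -1, le_rfl, show 1 ≤ m - 1 by omega, neg_ne_zero.mpr one_ne_zero,
      by rw [hb.lie_HJ, sub_add_cancel, neg_one_smul]⟩

theorem lieHom_apply_basis_eq_zero (hb : IsPGCA G b) {Gp : LieSubalgebra ℂ G}
    (hGp : (Gp : Submodule ℂ G) = degreeFiltration ℂ b GIdx.deg_s15 1) (φ : Gp →ₗ⁅ℂ⁆ ℂ)
    {i : GIdx} (hi : b i ∈ Gp) (h : 2 < i.deg_s15) : φ ⟨b i, hi⟩ = 0 := by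
  obtain ⟨j, k, c, hj, hk, hc, hjk⟩ := hb.exists_lie_eq_smul h
  exact φ.map_eq_zero_of_lie_eq_smul (x := ⟨b j, lieSubalgebra_mem_of_eq_degreeFiltration hGp hj⟩)
    (y := ⟨b k, lieSubalgebra_mem_of_eq_degreeFiltration hGp hk⟩) hc (Subtype.ext hjk)

end IsPGCA

/-- Every nonzero submodule `S` of a Whittaker `𝒢`-module `V` contains a nonzero
Whittaker vector, i.e. a nonzero `w' ∈ S` with `x·w' = ψ(x)w'` for some Lie algebra
homomorphism `ψ : 𝒢⁺ → ℂ`. -/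
theorem whittaker_submodule_has_whittaker_vector {G : Type*} [LieRing G] [LieAlgebra ℂ G]
    (b : Module.Basis GIdx ℂ G) (hb : IsPGCA G b)
    (Gp : LieSubalgebra ℂ G) (hGp : (Gp : Submodule ℂ G) = Submodule.span ℂ (pgcaPosSet b))
    (φ : Gp →ₗ⁅ℂ⁆ ℂ)
    (V : Type*) [AddCommGroup V] [Module ℂ V] [LieRingModule G V] [LieModule ℂ G V]
    (w : V)
    (hwhit : ∀ x : Gp, ⁅(x : G), w⁆ = φ x • w)
    (hcyc : LieSubmodule.lieSpan ℂ G {w} = ⊤)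
    (S : LieSubmodule ℂ G V) (hS : S ≠ ⊥) :
    ∃ w' ∈ S, w' ≠ 0 ∧ ∃ ψ : Gp →ₗ⁅ℂ⁆ ℂ, ∀ x : Gp, ⁅(x : G), w'⁆ = ψ x • w' := by
  have hGp' : (Gp : Submodule ℂ G) = degreeFiltration ℂ b GIdx.deg_s15 1 := by
    rw [hGp, pgcaPosSet_eq_image_s15]
    rfl
  obtain ⟨u, huS, hu0, hu⟩ := exists_whittaker_vector_of_graded (N := 2)
    hb.lie_mem_degreeFiltration hwhit hGp' (fun i hi h => hb.lieHom_apply_basis_eq_zero hGp' φ hi h)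
    b.span_eq hcyc S hS
  exact ⟨u, huS, hu0, φ, hu⟩
end
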